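/- arXiv:2501.16170 — 3 statements merged into one kernel-verified Lean document; each statement's English description precedes it below -/
import Mathlib

section
/- Let G be a locally finite, connected graph, let β₁ be a k₁-bottleneck and β₂ a k₂-bottleneck in G (possibly β₁ = β₂). If s₁ ∈ β₁ crosses s₂ ∈ β₂, then at least three of the four corners of s₁ and s₂ have order ≤ max{k₁,k₂}. -/
namespace LS

open SimpleGraph

variable {V : Type*}

/-- `(A, B)` is an (oriented) separation of `G`: the two sides cover `V`
and there is no edge between `A ∖ B` and `B ∖ A`. -/
def IsSep (G : SimpleGraph V) (A B : Set V) : Prop :=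
  A ∪ B = Set.univ ∧ ∀ a ∈ A \ B, ∀ b ∈ B \ A, ¬G.Adj a b

/-- `(A,B) ≥ (C,D)` for oriented separations, i.e. `A ⊆ C` and `B ⊇ D`. -/
def SepGE (s t : Set V × Set V) : Prop := s.1 ⊆ t.1 ∧ t.2 ⊆ s.2

/-- Two (unoriented) separations are nested if they have `≥`-comparable orientations. -/
def Nested (s t : Set V × Set V) : Prop :=
  SepGE s t ∨ SepGE s (t.2, t.1) ∨ SepGE (s.2, s.1) t ∨ SepGE (s.2, s.1) (t.2, t.1)

/-- Two separations cross if they are not nested. -/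
def Crosses (s t : Set V × Set V) : Prop := ¬Nested s t

/-- The neighbourhood `N_G(K)` of a vertex set `K`. -/
def nbhdSet (G : SimpleGraph V) (K : Set V) : Set V :=
  {v | v ∉ K ∧ ∃ u ∈ K, G.Adj u v}

/-- `K` is (the vertex set of) a connected component of the subgraph of `G` induced on `S`. -/
def IsCompOf (G : SimpleGraph V) (K S : Set V) : Prop :=
  K.Nonempty ∧ K ⊆ S ∧ (G.induce K).Connected ∧ ∀ a ∈ K, ∀ b ∈ S, G.Adj a b → b ∈ K

/-- `K` is a component of `G − X` that is tight at `X`, i.e. `N_G(K) = X`. -/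
def TightCompAt (G : SimpleGraph V) (K X : Set V) : Prop :=
  IsCompOf G K Xᶜ ∧ nbhdSet G K = X

/-- A separation `{A,B}` is tight if `G − (A ∩ B)` has tight components
contained in `A` and in `B`, respectively. -/
def TightSep (G : SimpleGraph V) (A B : Set V) : Prop :=
  (∃ K, TightCompAt G K (A ∩ B) ∧ K ⊆ A) ∧ ∃ K, TightCompAt G K (A ∩ B) ∧ K ⊆ B

/-- `X` is a tight separator: `G − X` has at least two components tight at `X`. -/
def TightSeparator (G : SimpleGraph V) (X : Set V) : Prop :=
  ∃ K₁ K₂, K₁ ≠ K₂ ∧ TightCompAt G K₁ X ∧ TightCompAt G K₂ X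

/-- The set `E_G(S,T)` of edges of `G` with one end in `S` and the other in `T`. -/
def edgesBetween (G : SimpleGraph V) (S T : Set V) : Set (Sym2 V) :=
  {e | ∃ u v, G.Adj u v ∧ e = s(u, v) ∧ u ∈ S ∧ v ∈ T}

/-- `∂X`: the set of edges of `G` with exactly one end in `X`. -/
def edgeBdry (G : SimpleGraph V) (X : Set V) : Set (Sym2 V) :=
  {e | ∃ u v, G.Adj u v ∧ e = s(u, v) ∧ u ∈ X ∧ v ∉ X}

/-- The separator of an oriented separation. -/
def tsSep (s : Set V × Set V) : Set V := s.1 ∩ s.2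

/-- `p` lists the three distinct oriented separations of a ⊤-star. -/
def IsTStar (G : SimpleGraph V) (p : Fin 3 → Set V × Set V) : Prop :=
  Function.Injective p ∧ (∀ i, IsSep G (p i).1 (p i).2) ∧
  (∀ i j, i ≠ j → Disjoint ((p i).1 \ (p i).2) ((p j).1 \ (p j).2)) ∧
  (⋃ i, ((p i).1 \ (p i).2)) = (⋃ i, tsSep (p i))ᶜ ∧
  ∀ i, ∀ v ∈ tsSep (p i), ∃ j, j ≠ i ∧ v ∈ tsSep (p j)

/-- The centre `Z` of a ⊤-star. -/
def tsCentre (p : Fin 3 → Set V × Set V) : Set V := ⋂ i, tsSep (p i)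

/-- The `ij`-link `X_{ij}` of a ⊤-star. -/
def tsLink (p : Fin 3 → Set V × Set V) (i j : Fin 3) : Set V :=
  (tsSep (p i) ∩ tsSep (p j)) \ tsCentre p

/-- The ⊤-star `p` is relevant with base `p 0`. -/
def RelevantTStar (G : SimpleGraph V) (p : Fin 3 → Set V × Set V) : Prop :=
  IsTStar G p ∧ TightSep G (p 0).1 (p 0).2 ∧
  ∀ x ∈ tsLink p 1 2, ∀ i : Fin 3, i ≠ 0 →
    (∃ y ∈ tsLink p 0 i, G.Adj x y) ∨
    ∃ y ∈ tsLink p 0 i ∪ tsCentre p, ∃ K, IsCompOf G K ((p i).1 \ (p i).2) ∧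
      x ∈ nbhdSet G K ∧ y ∈ nbhdSet G K

/-- A bottleneck of order `k` in `G`, encoded as a set of oriented separations
closed under reversal (representing a set of unoriented separations). -/
def IsBottleneck (G : SimpleGraph V) (k : ℕ) (β : Set (Set V × Set V)) : Prop :=
  β.Nonempty ∧ (∀ s ∈ β, (s.2, s.1) ∈ β) ∧
  (∀ s ∈ β, IsSep G s.1 s.2 ∧ TightSep G s.1 s.2 ∧ (s.1 ∩ s.2).encard = k) ∧
  ∀ p : Fin 3 → Set V × Set V, RelevantTStar G p →
    (∀ i, (tsSep (p i)).encard ≤ (k : ℕ∞)) → p 0 ∈ β → p 1 ∈ β ∨ p 2 ∈ β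

/-! ### Tangles -/

/-- A tangle of order `ℓ` in `G`. -/
def IsTangle (G : SimpleGraph V) (ℓ : ℕ) (τ : Set (Set V × Set V)) : Prop :=
  (∀ s ∈ τ, IsSep G s.1 s.2 ∧ (s.1 ∩ s.2).encard < (ℓ : ℕ∞)) ∧
  (∀ A B : Set V, IsSep G A B → (A ∩ B).encard < (ℓ : ℕ∞) → ((A, B) ∈ τ ∨ (B, A) ∈ τ)) ∧
  (∀ A B : Set V, (A, B) ∈ τ → (B, A) ∈ τ → A = B) ∧
  ∀ s₁ ∈ τ, ∀ s₂ ∈ τ, ∀ s₃ ∈ τ,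
    ¬(s₁.1 ∪ s₂.1 ∪ s₃.1 = Set.univ ∧
      ∀ u v : V, G.Adj u v →
        (u ∈ s₁.1 ∧ v ∈ s₁.1) ∨ (u ∈ s₂.1 ∧ v ∈ s₂.1) ∨ (u ∈ s₃.1 ∧ v ∈ s₃.1))

/-- The separation `{A,B}` distinguishes the tangles `τ` and `τ'`. -/
def DistinguishesT (τ τ' : Set (Set V × Set V)) (A B : Set V) : Prop :=
  ((A, B) ∈ τ ∧ (B, A) ∈ τ') ∨ ((B, A) ∈ τ ∧ (A, B) ∈ τ')

/-- The separation `{A,B}` distinguishes the vertex sets `Y` and `Z`. -/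
def DistSets (Y Z A B : Set V) : Prop :=
  (Y ⊆ A ∧ (Y ∩ (A \ B)).Nonempty ∧ Z ⊆ B ∧ (Z ∩ (B \ A)).Nonempty) ∨
  (Y ⊆ B ∧ (Y ∩ (B \ A)).Nonempty ∧ Z ⊆ A ∧ (Z ∩ (A \ B)).Nonempty)

/-! ### The construction of the nested sets `N^k(G)` -/

/-- `X^k`: the union of all `k`-bottlenecks in `G`. -/
def Xk (G : SimpleGraph V) (k : ℕ) : Set (Set V × Set V) :=
  {s | ∃ β, IsBottleneck G k β ∧ s ∈ β}

/-- `x^k(s)`: the number of separations in `X^k` that `s` crosses. -/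
noncomputable def xk (G : SimpleGraph V) (k : ℕ) (s : Set V × Set V) : ℕ :=
  {t ∈ Xk G k | Crosses s t}.ncard

/-- `N^k(G,β)` relative to a previously constructed set `M` of separations:
the elements of `β` nested with `M` that minimise `x^k` among those. -/
def NkOfBeta (G : SimpleGraph V) (M : Set (Set V × Set V)) (k : ℕ)
    (β : Set (Set V × Set V)) : Set (Set V × Set V) :=
  {s ∈ β | (∀ t ∈ M, Nested s t) ∧
    ∀ s' ∈ β, (∀ t ∈ M, Nested s' t) → xk G k s ≤ xk G k s'}

/-- `N^k(G)` relative to a previously constructed set `M`. -/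
def NkStep (G : SimpleGraph V) (M : Set (Set V × Set V)) (k : ℕ) :
    Set (Set V × Set V) :=
  {s | ∃ β, IsBottleneck G k β ∧ s ∈ NkOfBeta G M k β}

/-- `N^{<k}(G) = ⋃_{j<k} N^j(G)`. -/
noncomputable def Nlt (G : SimpleGraph V) : ℕ → Set (Set V × Set V)
  | 0 => ∅
  | k + 1 => Nlt G k ∪ NkStep G (Nlt G k) k

/-- `N^k(G)`. -/
noncomputable def Nk (G : SimpleGraph V) (k : ℕ) : Set (Set V × Set V) :=
  NkStep G (Nlt G k) k

/-- `N(G) = ⋃_k N^k(G)`. -/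
noncomputable def NSet (G : SimpleGraph V) : Set (Set V × Set V) :=
  ⋃ k, Nk G k

/-! ### Walks, local components and local separations -/

/-- An `X`-walk: a walk having precisely its first and last vertex in `X`. -/
def IsXWalk (G : SimpleGraph V) (X : Set V) {u v : V} (W : G.Walk u v) : Prop :=
  u ∈ X ∧ v ∈ X ∧ ∀ w ∈ W.support, w ∈ X → w = u ∨ w = v

/-- An `r`-local `X`-walk: an `X`-walk contained in a cycle of length `≤ r`,
or an `X`-walk consisting of a single `X`-edge. -/
def IsLocalXWalk (G : SimpleGraph V) (r : ℕ) (X : Set V) {u v : V} (W : G.Walk u v) :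
    Prop :=
  IsXWalk G X W ∧
  ((∃ (a : V) (C : G.Walk a a), C.IsCycle ∧ C.length ≤ r ∧ ∀ e ∈ W.edges, e ∈ C.edges) ∨
    W.length = 1)

/-- An `r`-local `X`-path. -/
def IsLocalXPath (G : SimpleGraph V) (r : ℕ) (X : Set V) {u v : V} (W : G.Walk u v) :
    Prop :=
  IsLocalXWalk G r X W ∧ W.IsPath

/-- Walks that are concatenations of `r`-local `X`-paths. -/
inductive ConcatLocalPaths (G : SimpleGraph V) (r : ℕ) (X : Set V) :
    ∀ {u v : V}, G.Walk u v → Prop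
  | single {u v : V} (W : G.Walk u v) (h : IsLocalXPath G r X W) :
      ConcatLocalPaths G r X W
  | comp {u v w : V} (W₁ : G.Walk u v) (W₂ : G.Walk v w)
      (h₁ : IsLocalXPath G r X W₁) (h₂ : ConcatLocalPaths G r X W₂) :
      ConcatLocalPaths G r X (W₁.append W₂)

/-- `W ∈ W_r(X)`: `W` is a concatenation of `r`-local `X`-paths repeating no vertex of `X`. -/
def MemWr (G : SimpleGraph V) (r : ℕ) (X : Set V) {u v : V} (W : G.Walk u v) : Prop :=
  ConcatLocalPaths G r X W ∧ ∀ x ∈ X, ¬W.support.Duplicate x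

/-- `X` is `r`-tomic: any two of its vertices are joined by a walk in `W_r(X)`. -/
def Rtomic (G : SimpleGraph V) (r : ℕ) (X : Set V) : Prop :=
  ∀ x ∈ X, ∀ y ∈ X, x ≠ y → ∃ W : G.Walk x y, MemWr G r X W

/-- One step of the relation generating the `r`-local components at `X`:
`e = f`, or `e` and `f` are the first and last edges of an `r`-local `X`-walk
(both required to lie in `∂X`). -/
def LocalEdgeStep (G : SimpleGraph V) (r : ℕ) (X : Set V) (e f : Sym2 V) : Prop :=
  e ∈ edgeBdry G X ∧ f ∈ edgeBdry G X ∧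
  (e = f ∨ ∃ (u v : V) (W : G.Walk u v), IsLocalXWalk G r X W ∧
      W.edges.head? = some e ∧ W.edges.getLast? = some f)

/-- `F` is an `r`-local component at `X`: an equivalence class of the transitive
closure of `LocalEdgeStep` on `∂X`. -/
def LocalCompAt (G : SimpleGraph V) (r : ℕ) (X : Set V) (F : Set (Sym2 V)) : Prop :=
  ∃ e ∈ edgeBdry G X, F = {f | Relation.ReflTransGen (LocalEdgeStep G r X) e f}

/-- An edge set `F` is tight with respect to `X` if every vertex of `X`
is incident with an edge of `F`. -/
def TightLocalComp (X : Set V) (F : Set (Sym2 V)) : Prop :=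
  ∀ x ∈ X, ∃ e ∈ F, x ∈ e

/-- `X` is a tight `r`-local separator: at least two tight `r`-local components at `X`. -/
def TightLocalSeparator (G : SimpleGraph V) (r : ℕ) (X : Set V) : Prop :=
  ∃ F₁ F₂, F₁ ≠ F₂ ∧ LocalCompAt G r X F₁ ∧ LocalCompAt G r X F₂ ∧
    TightLocalComp X F₁ ∧ TightLocalComp X F₂

/-- `(E₁, X, E₂)` is an (oriented) `r`-local separation of `G`. -/
def IsLocalSep (G : SimpleGraph V) (r : ℕ) (E₁ : Set (Sym2 V)) (X : Set V)
    (E₂ : Set (Sym2 V)) : Prop :=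
  Disjoint E₁ E₂ ∧ E₁ ∪ E₂ = edgeBdry G X ∧
    ∀ F, LocalCompAt G r X F → F ⊆ E₁ ∨ F ⊆ E₂

/-- A tight `r`-local separation: each side includes a tight `r`-local component at `X`. -/
def TightLocalSep (G : SimpleGraph V) (r : ℕ) (E₁ : Set (Sym2 V)) (X : Set V)
    (E₂ : Set (Sym2 V)) : Prop :=
  IsLocalSep G r E₁ X E₂ ∧
  (∃ F, LocalCompAt G r X F ∧ TightLocalComp X F ∧ F ⊆ E₁) ∧
  ∃ F, LocalCompAt G r X F ∧ TightLocalComp X F ∧ F ⊆ E₂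

/-- The oriented `r`-local separation `s_r` induced by the oriented separation
`s = (A₁, A₂)`: its separator is `X = A₁ ∩ A₂`, and its sides are
`E_i = E_G(A_i ∖ X, X)`. -/
def inducedLocal (G : SimpleGraph V) (s : Set V × Set V) :
    Set (Sym2 V) × Set V × Set (Sym2 V) :=
  (edgesBetween G (s.1 \ (s.1 ∩ s.2)) (s.1 ∩ s.2), s.1 ∩ s.2,
    edgesBetween G (s.2 \ (s.1 ∩ s.2)) (s.1 ∩ s.2))

/-- Some cycle of `G` of length `≤ r` alternates between the disjoint sets `X` and `Y`:
it visits four distinct vertices `x, y, x', y'` in this cyclic order with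
`x, x' ∈ X` and `y, y' ∈ Y`. -/
def Alternates (G : SimpleGraph V) (r : ℕ) (X Y : Set V) : Prop :=
  ∃ (a : V) (C : G.Walk a a), C.IsCycle ∧ C.length ≤ r ∧
    ∃ (x y x' y' : V) (l₁ l₂ l₃ l₄ l₅ : List V),
      x ∈ X ∧ x' ∈ X ∧ y ∈ Y ∧ y' ∈ Y ∧ x ≠ x' ∧ y ≠ y' ∧
      C.support = l₁ ++ x :: l₂ ++ y :: l₃ ++ x' :: l₄ ++ y' :: l₅

/-- `X` and `Y` are `r`-coupled. -/
def RCoupled (G : SimpleGraph V) (r : ℕ) (X Y : Set V) : Prop :=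
  (X ∩ Y).Nonempty ∨ (Disjoint X Y ∧ Alternates G r X Y)

/-- The `X`-link for the side `Fi` of an `r`-local separation with separator `Y`:
vertices `x ∈ X ∖ Y` from which some walk in `W_r(X)` visits `Y` with its first
edge in `∂Y` lying in `Fi`. -/
def LocalLink (G : SimpleGraph V) (r : ℕ) (X Y : Set V) (Fi : Set (Sym2 V)) : Set V :=
  {x | x ∈ X \ Y ∧ ∃ (z : V) (W : G.Walk x z), MemWr G r X W ∧
      (∃ y ∈ Y, y ∈ W.support) ∧
      ∃ (e : Sym2 V) (l₁ l₂ : List (Sym2 V)), W.edges = l₁ ++ e :: l₂ ∧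
        e ∈ edgeBdry G Y ∧ e ∈ Fi ∧ ∀ e' ∈ l₁, e' ∉ edgeBdry G Y}

/-- The `r`-local separations `{E₁,X,E₂}` and `{F₁,Y,F₂}` cross. -/
def LocalCrosses (G : SimpleGraph V) (r : ℕ) (E₁ : Set (Sym2 V)) (X : Set V)
    (E₂ : Set (Sym2 V)) (F₁ : Set (Sym2 V)) (Y : Set V) (F₂ : Set (Sym2 V)) : Prop :=
  RCoupled G r X Y ∧ ∀ i j : Bool,
    (LocalLink G r X Y (cond j F₁ F₂)).Nonempty ∨
    (LocalLink G r Y X (cond i E₁ E₂)).Nonempty ∨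
    ((cond i E₁ E₂) ∩ (cond j F₁ F₂) ∩ edgeBdry G (X ∩ Y)).Nonempty

/-- The edge set of a walk, as a set. -/
def walkEdgeSet {G : SimpleGraph V} {a b : V} (W : G.Walk a b) : Set (Sym2 V) :=
  {e | e ∈ W.edges}

/-- The binary cycle space of `G` is generated by the cycles of length `≤ r`:
the edge set of every cycle is a symmetric difference of edge sets of cycles
of length `≤ r`. -/
def CycleSpaceGenShort (G : SimpleGraph V) (r : ℕ) : Prop :=
  ∀ ⦃a : V⦄ (C : G.Walk a a), C.IsCycle →
    ∃ L : List ((b : V) × G.Walk b b),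
      (∀ p ∈ L, p.2.IsCycle ∧ p.2.length ≤ r) ∧
      walkEdgeSet C = L.foldr (fun p E => symmDiff (walkEdgeSet p.2) E) ∅

/-! ### Local ⊤-stars and local bottlenecks -/

/-- `q` lists the three oriented `r`-local separations of an `r`-local ⊤-star. -/
def IsLocalTStar (G : SimpleGraph V) (r : ℕ)
    (q : Fin 3 → Set (Sym2 V) × Set V × Set (Sym2 V)) : Prop :=
  Function.Injective q ∧
  (∀ i, IsLocalSep G r (q i).1 (q i).2.1 (q i).2.2) ∧
  (∀ i j, i ≠ j → Disjoint (q i).1 (q j).1) ∧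
  (⋃ i, (q i).1) = edgeBdry G (⋃ i, (q i).2.1) ∧
  (∀ i, ∀ v ∈ (q i).2.1, ∃ j, j ≠ i ∧ v ∈ (q j).2.1) ∧
  ∀ F, LocalCompAt G r (⋃ i, (q i).2.1) F → ∃ i, F ⊆ (q i).1

/-- The `r`-local ⊤-star `q` is relevant with base `q 0`. -/
def RelevantLocalTStar (G : SimpleGraph V) (r : ℕ)
    (q : Fin 3 → Set (Sym2 V) × Set V × Set (Sym2 V)) : Prop :=
  IsLocalTStar G r q ∧ TightLocalSep G r (q 0).1 (q 0).2.1 (q 0).2.2 ∧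
  ∀ x ∈ ((q 1).2.1 ∩ (q 2).2.1) \ ⋂ j, (q j).2.1, ∀ i : Fin 3, i ≠ 0 →
    (∃ y ∈ ((q 0).2.1 ∩ (q i).2.1) \ ⋂ j, (q j).2.1, G.Adj x y) ∨
    ∃ F, LocalCompAt G r (⋃ j, (q j).2.1) F ∧ F ⊆ (q i).1 ∧
      (∃ e ∈ F, x ∈ e) ∧ ∃ e ∈ F, ∃ y ∈ (q 0).2.1 ∩ (q i).2.1, y ∈ e

/-- An `r`-local bottleneck of order `k` in `G`, encoded as a set of oriented
`r`-local separations closed under reversal. -/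
def IsLocalBottleneck (G : SimpleGraph V) (r k : ℕ)
    (β : Set (Set (Sym2 V) × Set V × Set (Sym2 V))) : Prop :=
  β.Nonempty ∧ (∀ q ∈ β, (q.2.2, q.2.1, q.1) ∈ β) ∧
  (∀ q ∈ β, TightLocalSep G r q.1 q.2.1 q.2.2 ∧ q.2.1.encard = (k : ℕ∞)) ∧
  ∀ p : Fin 3 → Set (Sym2 V) × Set V × Set (Sym2 V), RelevantLocalTStar G r p →
    (∀ i, ((p i).2.1).encard ≤ (k : ℕ∞)) → p 0 ∈ β → p 1 ∈ β ∨ p 2 ∈ β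

/-!
Let `{A,B} ∈ β` have order `k` and let `{C,D}` be tight. If the corners at `B ∩ C` and `B ∩ D`
both have order `< k`, then `(A,B)`, `(B ∩ C, A ∪ D)`, `(B ∩ D, A ∪ C)` form a ⊤-star of order
`≤ k`. It is relevant as soon as some vertex of `A ∩ C ∩ D` lies outside `B`: a tight component
of `G − (C ∩ D)` inside `C` then has neighbours in `A ∖ B` and at every vertex of
`(B ∩ C ∩ D) ∖ A`, and walking through it from the `B` side to the `A` side links such a vertex to
`A ∩ B ∩ C`. The bottleneck property would put a separation of order `< k` into `β`, which is
absurd; hence `A ∩ C ∩ D ⊆ B` and the corner at `A ∩ C` has order `≤ k`. Applied to all four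
orientations, and since opposite corners have orders summing to `k₁ + k₂`, this leaves at most
one corner of order `> max k₁ k₂`.
-/

section Separations

variable {G : SimpleGraph V} {A B C D : Set V}

lemma IsSep.symm (h : IsSep G A B) : IsSep G B A :=
  ⟨by rw [Set.union_comm, h.1], fun a ha b hb hab => h.2 b hb a ha hab.symm⟩

lemma IsSep.mem_or_mem (h : IsSep G A B) (v : V) : v ∈ A ∨ v ∈ B :=
  (Set.mem_union v A B).1 (h.1 ▸ Set.mem_univ v)

lemma IsSep.inter_union (hAB : IsSep G A B) (hCD : IsSep G C D) :
    IsSep G (B ∩ C) (A ∪ D) := by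
  refine ⟨?_, ?_⟩
  · ext v
    have := hAB.mem_or_mem v
    have := hCD.mem_or_mem v
    simp only [Set.mem_union, Set.mem_inter_iff, Set.mem_univ, iff_true]
    tauto
  · rintro a ⟨⟨haB, haC⟩, ha⟩ b ⟨-, hb⟩ hab
    simp only [Set.mem_union, not_or] at ha
    by_cases hbC : b ∈ C
    · have hbA : b ∈ A := (hAB.mem_or_mem b).resolve_right fun hbB => hb ⟨hbB, hbC⟩
      exact hAB.2 b ⟨hbA, fun hbB => hb ⟨hbB, hbC⟩⟩ a ⟨haB, ha.1⟩ hab.symm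
    · exact hCD.2 a ⟨haC, ha.2⟩ b ⟨(hCD.mem_or_mem b).resolve_left hbC, hbC⟩ hab

lemma IsSep.encard_corner_add_encard_corner (hAB : IsSep G A B) (hCD : IsSep G C D) :
    (A ∩ C ∩ (B ∪ D)).encard + (B ∩ D ∩ (A ∪ C)).encard =
      (A ∩ B).encard + (C ∩ D).encard := by
  rw [← Set.encard_union_add_encard_inter, ← Set.encard_union_add_encard_inter (A ∩ B)]
  congr 2 <;> ext v
  · have := hAB.mem_or_mem v
    have := hCD.mem_or_mem v
    simp only [Set.mem_union, Set.mem_inter_iff]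
    tauto
  · simp only [Set.mem_union, Set.mem_inter_iff]
    tauto

end Separations

section Components

variable {G : SimpleGraph V}

lemma exists_isCompOf_mem {S : Set V} {u : V} (hu : u ∈ S) : ∃ K, IsCompOf G K S ∧ u ∈ K := by
  set 𝒮 := {s | s ⊆ S ∧ u ∈ s ∧ (G.induce s).Connected}
  have hu𝒮 : {u} ∈ 𝒮 :=
    ⟨Set.singleton_subset_iff.2 hu, rfl, Connected.mk Preconnected.of_subsingleton⟩
  refine ⟨⋃₀ 𝒮, ⟨⟨u, {u}, hu𝒮, rfl⟩, Set.sUnion_subset fun s hs => hs.1,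
    induce_sUnion_connected_of_pairwise_not_disjoint ⟨_, hu𝒮⟩
      (fun hs ht => ⟨u, hs.2.1, ht.2.1⟩) fun hs => hs.2.2, ?_⟩, {u}, hu𝒮, rfl⟩
  rintro a ⟨s, hs, has⟩ b hb hab
  refine ⟨s ∪ {a, b}, ⟨Set.union_subset hs.1 (Set.insert_subset (hs.1 has)
    (Set.singleton_subset_iff.2 hb)), Or.inl hs.2.1, induce_union_connected
      hs.2.2.preconnected (induce_pair_connected_of_adj hab).preconnected
      ⟨a, has, Set.mem_insert a _⟩⟩, Or.inr (by simp)⟩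

lemma exists_adj_mem_diff_of_connected_induce {K L : Set V} (hL : (G.induce L).Connected)
    {u w : V} (hu : u ∈ L ∩ K) (hw : w ∈ L \ K) :
    ∃ a ∈ L ∩ K, ∃ b ∈ L \ K, G.Adj a b := by
  obtain ⟨W⟩ := hL.preconnected ⟨u, hu.1⟩ ⟨w, hw.1⟩
  obtain ⟨d, -, hd₁, hd₂⟩ := W.exists_boundary_dart {x : L | x.1 ∈ K} hu.2 hw.2
  exact ⟨d.fst, ⟨d.fst.2, hd₁⟩, d.snd, ⟨d.snd.2, hd₂⟩, d.adj⟩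

end Components

section CornerStar

variable {G : SimpleGraph V} {A B C D : Set V}

def cornerStar (A B C D : Set V) : Fin 3 → Set V × Set V :=
  ![(A, B), (B ∩ C, A ∪ D), (B ∩ D, A ∪ C)]

@[simp] lemma cornerStar_zero : cornerStar A B C D 0 = (A, B) := rfl

@[simp] lemma cornerStar_one : cornerStar A B C D 1 = (B ∩ C, A ∪ D) := rfl

@[simp] lemma cornerStar_two : cornerStar A B C D 2 = (B ∩ D, A ∪ C) := rfl

lemma tsLink_cornerStar_zero_one : tsLink (cornerStar A B C D) 0 1 = (A ∩ B ∩ C) \ D := by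
  ext v
  simp only [tsLink, tsCentre, tsSep, cornerStar_zero, cornerStar_one, cornerStar_two,
    Set.mem_sdiff, Set.mem_inter_iff, Set.mem_union, Set.mem_iInter, Fin.forall_fin_succ,
    Fin.succ_zero_eq_one, Fin.succ_one_eq_two, IsEmpty.forall_iff, and_true]
  tauto

lemma tsLink_cornerStar_zero_two : tsLink (cornerStar A B C D) 0 2 = (A ∩ B ∩ D) \ C := by
  ext v
  simp only [tsLink, tsCentre, tsSep, cornerStar_zero, cornerStar_one, cornerStar_two,
    Set.mem_sdiff, Set.mem_inter_iff, Set.mem_union, Set.mem_iInter, Fin.forall_fin_succ,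
    Fin.succ_zero_eq_one, Fin.succ_one_eq_two, IsEmpty.forall_iff, and_true]
  tauto

lemma tsLink_cornerStar_one_two : tsLink (cornerStar A B C D) 1 2 = (B ∩ C ∩ D) \ A := by
  ext v
  simp only [tsLink, tsCentre, tsSep, cornerStar_zero, cornerStar_one, cornerStar_two,
    Set.mem_sdiff, Set.mem_inter_iff, Set.mem_union, Set.mem_iInter, Fin.forall_fin_succ,
    Fin.succ_zero_eq_one, Fin.succ_one_eq_two, IsEmpty.forall_iff, and_true]
  tauto

lemma isTStar_cornerStar (hAB : IsSep G A B) (hCD : IsSep G C D)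
    (hinj : Function.Injective (cornerStar A B C D)) : IsTStar G (cornerStar A B C D) := by
  refine ⟨hinj, fun i => ?_, fun i j hij => ?_, ?_, fun i v hv => ?_⟩
  · fin_cases i
    exacts [hAB, hAB.inter_union hCD, hAB.inter_union hCD.symm]
  · fin_cases i <;> fin_cases j <;> simp_all [cornerStar, Set.disjoint_left]
  · ext v
    have := hAB.mem_or_mem v
    have := hCD.mem_or_mem v
    simp only [tsSep, cornerStar_zero, cornerStar_one, cornerStar_two, Set.mem_iUnion,
      Set.mem_compl_iff, Set.mem_sdiff, Set.mem_inter_iff, Set.mem_union, Fin.exists_fin_succ,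
      Fin.succ_zero_eq_one, Fin.succ_one_eq_two, IsEmpty.exists_iff, or_false]
    tauto
  · have := hCD.mem_or_mem v
    fin_cases i <;> simp_all [tsSep, cornerStar, Fin.exists_fin_succ]

lemma exists_link_of_tightCompAt (hAB : IsSep G A B) {K : Set V}
    (hK : TightCompAt G K (C ∩ D)) (hKC : K ⊆ C) {x₀ x : V} (hx₀ : x₀ ∈ (A ∩ C ∩ D) \ B)
    (hx : x ∈ (B ∩ C ∩ D) \ A) :
    ∃ y ∈ (A ∩ B ∩ C) \ D, G.Adj x y ∨
      ∃ K', IsCompOf G K' ((B ∩ C) \ (A ∪ D)) ∧ x ∈ nbhdSet G K' ∧ y ∈ nbhdSet G K' := by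
  have hKD : ∀ w ∈ K, w ∉ D := fun w hw hwD => hK.1.2.1 hw ⟨hKC hw, hwD⟩
  have hN : ∀ v ∈ C ∩ D, ∃ u ∈ K, G.Adj u v := fun v hv => (hK.2.symm ▸ hv : v ∈ nbhdSet G K).2
  obtain ⟨u₀, hu₀K, hu₀x₀⟩ := hN x₀ ⟨hx₀.1.1.2, hx₀.1.2⟩
  have hu₀A : u₀ ∈ A := by
    by_contra h
    exact hAB.2 x₀ ⟨hx₀.1.1.1, hx₀.2⟩ u₀ ⟨(hAB.mem_or_mem u₀).resolve_left h, h⟩ hu₀x₀.symm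
  obtain ⟨u, huK, hux⟩ := hN x ⟨hx.1.1.2, hx.1.2⟩
  have huB : u ∈ B := by
    by_contra h
    exact hAB.2 u ⟨(hAB.mem_or_mem u).resolve_right h, h⟩ x ⟨hx.1.1.1, hx.2⟩ hux
  by_cases huA : u ∈ A
  · exact ⟨u, ⟨⟨⟨huA, huB⟩, hKC huK⟩, hKD u huK⟩, Or.inl hux.symm⟩
  have huR : u ∈ (B ∩ C) \ (A ∪ D) :=
    ⟨⟨huB, hKC huK⟩, by rintro (h | h); exacts [huA h, hKD u huK h]⟩
  obtain ⟨K', hK', huK'⟩ := exists_isCompOf_mem (G := G) huR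
  -- walking inside `K` from `u` to `u₀ ∈ A`, we must leave `K'` through a vertex `v ∈ A`
  obtain ⟨v', ⟨-, hv'K'⟩, v, ⟨hvK, hvK'⟩, hv'v⟩ := exists_adj_mem_diff_of_connected_induce
    hK.1.2.2.1 ⟨huK, huK'⟩ ⟨hu₀K, fun h => (hK'.2.1 h).2 (Or.inl hu₀A)⟩
  have hv'R := hK'.2.1 hv'K'
  have hvA : v ∈ A := by
    by_contra h
    refine hvK' (hK'.2.2.2 v' hv'K' v ⟨⟨(hAB.mem_or_mem v).resolve_left h, hKC hvK⟩, ?_⟩ hv'v)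
    rintro (h' | h')
    exacts [h h', hKD v hvK h']
  have hvB : v ∈ B := by
    by_contra h
    exact hAB.2 v ⟨hvA, h⟩ v' ⟨hv'R.1.1, fun h => hv'R.2 (Or.inl h)⟩ hv'v.symm
  exact ⟨v, ⟨⟨⟨hvA, hvB⟩, hKC hvK⟩, hKD v hvK⟩, Or.inr ⟨K', hK',
    ⟨fun h => (hK'.2.1 h).2 (Or.inr hx.1.2), u, huK', hux⟩, hvK', v', hv'K', hv'v⟩⟩

lemma relevantTStar_cornerStar (hAB : IsSep G A B) (htAB : TightSep G A B)
    (htCD : TightSep G C D) (hstar : IsTStar G (cornerStar A B C D)) {x₀ : V}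
    (hx₀ : x₀ ∈ (A ∩ C ∩ D) \ B) : RelevantTStar G (cornerStar A B C D) := by
  obtain ⟨⟨KC, hKC, hKCsub⟩, KD, hKD, hKDsub⟩ := htCD
  refine ⟨hstar, htAB, fun x hx i hi => ?_⟩
  rw [tsLink_cornerStar_one_two] at hx
  fin_cases i
  · exact absurd rfl hi
  · obtain ⟨y, hy, h⟩ := exists_link_of_tightCompAt hAB hKC hKCsub hx₀ hx
    rw [← tsLink_cornerStar_zero_one (D := D)] at hy
    rcases h with h | h
    exacts [Or.inl ⟨y, hy, h⟩, Or.inr ⟨y, Or.inl hy, h⟩]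
  · rw [Set.inter_comm C D] at hKD
    rw [Set.inter_right_comm] at hx₀ hx
    obtain ⟨y, hy, h⟩ := exists_link_of_tightCompAt hAB hKD hKDsub hx₀ hx
    rw [← tsLink_cornerStar_zero_two (C := C)] at hy
    rcases h with h | h
    exacts [Or.inl ⟨y, hy, h⟩, Or.inr ⟨y, Or.inl hy, h⟩]

end CornerStar

section Bottleneck

variable {G : SimpleGraph V} {k : ℕ} {β : Set (Set V × Set V)} {A B C D : Set V}

theorem IsBottleneck.inter_inter_subset (hβ : IsBottleneck G k β) (hmem : (A, B) ∈ β)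
    (hCD : IsSep G C D) (htCD : TightSep G C D) (hBC : (B ∩ C ∩ (A ∪ D)).encard < k)
    (hBD : (B ∩ D ∩ (A ∪ C)).encard < k) : A ∩ C ∩ D ⊆ B := by
  intro x₀ hx₀
  by_contra hx₀B
  obtain ⟨hsep, htight, hk⟩ := hβ.2.2.1 _ hmem
  have hcover : A ∩ B ⊆ (B ∩ C ∩ (A ∪ D)) ∪ (B ∩ D ∩ (A ∪ C)) := fun v hv => by
    rcases hCD.mem_or_mem v with h | h
    exacts [Or.inl ⟨⟨hv.2, h⟩, Or.inl hv.1⟩, Or.inr ⟨⟨hv.2, h⟩, Or.inl hv.1⟩]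
  have hne : ∀ i j, i ≠ j → tsSep (cornerStar A B C D i) ≠ tsSep (cornerStar A B C D j) := by
    have h₀₁ : A ∩ B ≠ B ∩ C ∩ (A ∪ D) := fun h => hBC.ne (h ▸ hk)
    have h₀₂ : A ∩ B ≠ B ∩ D ∩ (A ∪ C) := fun h => hBD.ne (h ▸ hk)
    have h₁₂ : B ∩ C ∩ (A ∪ D) ≠ B ∩ D ∩ (A ∪ C) := fun h => by
      rw [← h, Set.union_self] at hcover
      exact (hk ▸ Set.encard_le_encard hcover).not_gt hBC
    intro i j hij
    fin_cases i <;> fin_cases j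
    all_goals first
      | exact absurd rfl hij
      | exact h₀₁ | exact h₀₂ | exact h₁₂ | exact h₀₁.symm | exact h₀₂.symm | exact h₁₂.symm
  have hinj : Function.Injective (cornerStar A B C D) := fun i j h =>
    by_contra fun hij => hne i j hij (congrArg tsSep h)
  have hord : ∀ i, (tsSep (cornerStar A B C D i)).encard ≤ k := by
    intro i
    fin_cases i
    exacts [hk.le, hBC.le, hBD.le]
  rcases hβ.2.2.2 _ (relevantTStar_cornerStar hsep htight htCD
    (isTStar_cornerStar hsep hCD hinj) ⟨hx₀, hx₀B⟩) hord hmem with h | h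
  · exact hBC.ne (hβ.2.2.1 _ h).2.2
  · exact hBD.ne (hβ.2.2.1 _ h).2.2

theorem IsBottleneck.encard_inter_inter_union_le (hβ : IsBottleneck G k β)
    (hmem : (A, B) ∈ β)
    (hCD : IsSep G C D) (htCD : TightSep G C D) (hBC : (B ∩ C ∩ (A ∪ D)).encard < k)
    (hBD : (B ∩ D ∩ (A ∪ C)).encard < k) : (A ∩ C ∩ (B ∪ D)).encard ≤ k := by
  rw [← (hβ.2.2.1 _ hmem).2.2]
  refine Set.encard_le_encard fun v ⟨⟨hA, hC⟩, h⟩ => ⟨hA, h.elim id fun hD => ?_⟩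
  exact hβ.inter_inter_subset hmem hCD htCD hBC hBD ⟨⟨hA, hC⟩, hD⟩

end Bottleneck

/- Two corners of order `> max k₁ k₂` cannot be opposite, as opposite orders sum to `k₁ + k₂`;
if they are adjacent, the other two have order `< min k₁ k₂` and one of `h₁`–`h₄` applies. -/
lemma three_of_four_le_max {a b c d : ℕ∞} {k₁ k₂ : ℕ}
    (hac : a + c = k₁ + k₂) (hbd : b + d = k₁ + k₂)
    (h₁ : d < k₁ → c < k₁ → a ≤ k₁) (h₂ : a < k₁ → b < k₁ → d ≤ k₁)
    (h₃ : b < k₂ → c < k₂ → a ≤ k₂) (h₄ : a < k₂ → d < k₂ → b ≤ k₂) :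
    (a ≤ (max k₁ k₂ : ℕ∞) ∧ b ≤ (max k₁ k₂ : ℕ∞) ∧ c ≤ (max k₁ k₂ : ℕ∞)) ∨
    (a ≤ (max k₁ k₂ : ℕ∞) ∧ b ≤ (max k₁ k₂ : ℕ∞) ∧ d ≤ (max k₁ k₂ : ℕ∞)) ∨
    (a ≤ (max k₁ k₂ : ℕ∞) ∧ c ≤ (max k₁ k₂ : ℕ∞) ∧ d ≤ (max k₁ k₂ : ℕ∞)) ∨
    (b ≤ (max k₁ k₂ : ℕ∞) ∧ c ≤ (max k₁ k₂ : ℕ∞) ∧ d ≤ (max k₁ k₂ : ℕ∞)) := by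
  have hfin : ((k₁ + k₂ : ℕ) : ℕ∞) ≠ ⊤ := ENat.natCast_ne_top _
  lift a to ℕ using ne_top_of_le_ne_top hfin (by push_cast; exact hac ▸ le_self_add)
  lift c to ℕ using ne_top_of_le_ne_top hfin (by push_cast; exact hac ▸ le_add_self)
  lift b to ℕ using ne_top_of_le_ne_top hfin (by push_cast; exact hbd ▸ le_self_add)
  lift d to ℕ using ne_top_of_le_ne_top hfin (by push_cast; exact hbd ▸ le_add_self)
  rw [← Nat.mono_cast.map_max]
  norm_cast at *
  omega

theorem statement6_general {V : Type*} (G : SimpleGraph V)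
    (k₁ k₂ : ℕ) (β₁ β₂ : Set (Set V × Set V))
    (hβ₁ : IsBottleneck G k₁ β₁) (hβ₂ : IsBottleneck G k₂ β₂)
    (A B C D : Set V) (h₁ : (A, B) ∈ β₁) (h₂ : (C, D) ∈ β₂) :
    (((A ∩ C) ∩ (B ∪ D)).encard ≤ (max k₁ k₂ : ℕ∞) ∧
     ((A ∩ D) ∩ (B ∪ C)).encard ≤ (max k₁ k₂ : ℕ∞) ∧
     ((B ∩ D) ∩ (A ∪ C)).encard ≤ (max k₁ k₂ : ℕ∞)) ∨
    (((A ∩ C) ∩ (B ∪ D)).encard ≤ (max k₁ k₂ : ℕ∞) ∧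
     ((A ∩ D) ∩ (B ∪ C)).encard ≤ (max k₁ k₂ : ℕ∞) ∧
     ((B ∩ C) ∩ (A ∪ D)).encard ≤ (max k₁ k₂ : ℕ∞)) ∨
    (((A ∩ C) ∩ (B ∪ D)).encard ≤ (max k₁ k₂ : ℕ∞) ∧
     ((B ∩ D) ∩ (A ∪ C)).encard ≤ (max k₁ k₂ : ℕ∞) ∧
     ((B ∩ C) ∩ (A ∪ D)).encard ≤ (max k₁ k₂ : ℕ∞)) ∨
    (((A ∩ D) ∩ (B ∪ C)).encard ≤ (max k₁ k₂ : ℕ∞) ∧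
     ((B ∩ D) ∩ (A ∪ C)).encard ≤ (max k₁ k₂ : ℕ∞) ∧
     ((B ∩ C) ∩ (A ∪ D)).encard ≤ (max k₁ k₂ : ℕ∞)) := by
  obtain ⟨hAB, htAB, hk₁⟩ := hβ₁.2.2.1 _ h₁
  obtain ⟨hCD, htCD, hk₂⟩ := hβ₂.2.2.1 _ h₂
  apply three_of_four_le_max
  · rw [hAB.encard_corner_add_encard_corner hCD]
    exact congrArg₂ (· + ·) hk₁ hk₂
  · rw [hAB.encard_corner_add_encard_corner hCD.symm, Set.inter_comm D C]
    exact congrArg₂ (· + ·) hk₁ hk₂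
  · exact hβ₁.encard_inter_inter_union_le h₁ hCD htCD
  · exact hβ₁.encard_inter_inter_union_le (hβ₁.2.1 _ h₁) hCD htCD
  · simpa only [Set.inter_comm, Set.union_comm] using
      hβ₂.encard_inter_inter_union_le h₂ hAB htAB
  · simpa only [Set.inter_comm, Set.union_comm] using
      hβ₂.encard_inter_inter_union_le (hβ₂.2.1 _ h₂) hAB htAB

/-- If `s₁ ∈ β₁` crosses `s₂ ∈ β₂` for bottlenecks `β₁, β₂` of
orders `k₁, k₂` in a locally finite connected graph, then at least three of the
four corners have order `≤ max {k₁, k₂}`. -/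
theorem statement6 {V : Type*} (G : SimpleGraph V)
    (hlf : ∀ v : V, (G.neighborSet v).Finite) (hG : G.Connected)
    (k₁ k₂ : ℕ) (β₁ β₂ : Set (Set V × Set V))
    (hβ₁ : IsBottleneck G k₁ β₁) (hβ₂ : IsBottleneck G k₂ β₂)
    (A B C D : Set V) (h₁ : (A, B) ∈ β₁) (h₂ : (C, D) ∈ β₂)
    (hcross : Crosses (A, B) (C, D)) :
    (((A ∩ C) ∩ (B ∪ D)).encard ≤ (max k₁ k₂ : ℕ∞) ∧
     ((A ∩ D) ∩ (B ∪ C)).encard ≤ (max k₁ k₂ : ℕ∞) ∧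
     ((B ∩ D) ∩ (A ∪ C)).encard ≤ (max k₁ k₂ : ℕ∞)) ∨
    (((A ∩ C) ∩ (B ∪ D)).encard ≤ (max k₁ k₂ : ℕ∞) ∧
     ((A ∩ D) ∩ (B ∪ C)).encard ≤ (max k₁ k₂ : ℕ∞) ∧
     ((B ∩ C) ∩ (A ∪ D)).encard ≤ (max k₁ k₂ : ℕ∞)) ∨
    (((A ∩ C) ∩ (B ∪ D)).encard ≤ (max k₁ k₂ : ℕ∞) ∧
     ((B ∩ D) ∩ (A ∪ C)).encard ≤ (max k₁ k₂ : ℕ∞) ∧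
     ((B ∩ C) ∩ (A ∪ D)).encard ≤ (max k₁ k₂ : ℕ∞)) ∨
    (((A ∩ D) ∩ (B ∪ C)).encard ≤ (max k₁ k₂ : ℕ∞) ∧
     ((B ∩ D) ∩ (A ∪ C)).encard ≤ (max k₁ k₂ : ℕ∞) ∧
     ((B ∩ C) ∩ (A ∪ D)).encard ≤ (max k₁ k₂ : ℕ∞)) :=
  statement6_general G k₁ k₂ β₁ β₂ hβ₁ hβ₂ A B C D h₁ h₂

end LS
end

section
/- Let {A₁,A₂} and {C₁,C₂} be two crossing separations of a connected graph G whose centre is empty (i.e., their separators X := A₁∩A₂ and Y := C₁∩C₂ are disjoint). Then some two opposite links are non-empty: either both X-links (X∖C₂ and X∖C₁) are non-empty, or both Y-links (Y∖A₂ and Y∖A₁) are non-empty. -/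
namespace LS

open SimpleGraph

variable {V : Type*}

lemma isSep_symm {G : SimpleGraph V} {A B : Set V} (h : IsSep G A B) : IsSep G B A :=
  ⟨by rw [Set.union_comm]; exact h.1, fun b hb a ha hadj => h.2 a ha b hb hadj.symm⟩

lemma corner_lemma {G : SimpleGraph V} (hG : G.Connected) {A₁ A₂ C₁ C₂ : Set V}
    (h₁ : IsSep G A₁ A₂) (h₂ : IsSep G C₁ C₂)
    (hX : A₁ ∩ A₂ ∩ C₁ = ∅) (hY : C₁ ∩ C₂ ∩ A₁ = ∅) :
    A₁ ∩ C₁ = ∅ ∨ A₁ ∩ C₁ = Set.univ := by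
  have hclosed : ∀ u ∈ A₁ ∩ C₁, ∀ v, G.Adj u v → v ∈ A₁ ∩ C₁ := by
    intro u hu v hadj
    constructor
    · by_contra hv
      have hv2 : v ∈ A₂ := by
        have : v ∈ A₁ ∪ A₂ := h₁.1 ▸ Set.mem_univ v
        exact this.resolve_left hv
      have hu2 : u ∈ A₂ := by
        by_contra hu2
        exact h₁.2 u ⟨hu.1, hu2⟩ v ⟨hv2, hv⟩ hadj
      exact (Set.eq_empty_iff_forall_notMem.mp hX u) ⟨⟨hu.1, hu2⟩, hu.2⟩
    · by_contra hv
      have hv2 : v ∈ C₂ := by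
        have : v ∈ C₁ ∪ C₂ := h₂.1 ▸ Set.mem_univ v
        exact this.resolve_left hv
      have hu2 : u ∈ C₂ := by
        by_contra hu2
        exact h₂.2 u ⟨hu.2, hu2⟩ v ⟨hv2, hv⟩ hadj
      exact (Set.eq_empty_iff_forall_notMem.mp hY u) ⟨⟨hu.2, hu2⟩, hu.1⟩
  have hwalk : ∀ {u v : V} (_ : G.Walk u v), u ∈ A₁ ∩ C₁ → v ∈ A₁ ∩ C₁ := by
    intro u v W
    induction W with
    | nil => exact id
    | cons h p ih => intro hu; exact ih (hclosed _ hu _ h)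
  rcases Set.eq_empty_or_nonempty (A₁ ∩ C₁) with h | ⟨u, hu⟩
  · exact Or.inl h
  · right
    ext w
    simp only [Set.mem_univ, iff_true]
    obtain ⟨W⟩ := hG.preconnected u w
    exact hwalk W hu

/-- If two separations of a connected graph cross and their
centre is empty, then some two opposite links are non-empty. -/
theorem statement8 {V : Type*} (G : SimpleGraph V) (hG : G.Connected)
    (A₁ A₂ C₁ C₂ : Set V)
    (h₁ : IsSep G A₁ A₂) (h₂ : IsSep G C₁ C₂)
    (hcross : Crosses (A₁, A₂) (C₁, C₂))
    (hcentre : (A₁ ∩ A₂) ∩ (C₁ ∩ C₂) = ∅) :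
    (((A₁ ∩ A₂) \ C₂).Nonempty ∧ ((A₁ ∩ A₂) \ C₁).Nonempty) ∨
    (((C₁ ∩ C₂) \ A₂).Nonempty ∧ ((C₁ ∩ C₂) \ A₁).Nonempty) := by
  by_contra hcon
  push_neg at hcon
  -- From emptiness of a link and empty centre derive X ∩ Cᵢ = ∅ etc.
  have hcent : ∀ x, ¬(x ∈ A₁ ∩ A₂ ∧ x ∈ C₁ ∩ C₂) := by
    intro x hx
    exact (Set.eq_empty_iff_forall_notMem.mp hcentre x) ⟨hx.1, hx.2⟩
  have hXcase : (A₁ ∩ A₂) ∩ C₁ = ∅ ∨ (A₁ ∩ A₂) ∩ C₂ = ∅ := by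
    by_cases h : ((A₁ ∩ A₂) \ C₂).Nonempty
    · have h' : (A₁ ∩ A₂) \ C₁ = ∅ :=
        hcon.1 h
      right
      ext x; simp only [Set.mem_empty_iff_false, iff_false]
      rintro ⟨hx, hx2⟩
      have hx1 : x ∈ C₁ := by
        by_contra hc
        exact (Set.eq_empty_iff_forall_notMem.mp h' x) ⟨hx, hc⟩
      exact hcent x ⟨hx, hx1, hx2⟩
    · rw [Set.not_nonempty_iff_eq_empty] at h
      left
      ext x; simp only [Set.mem_empty_iff_false, iff_false]
      rintro ⟨hx, hx1⟩
      have hx2 : x ∈ C₂ := by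
        by_contra hc
        exact (Set.eq_empty_iff_forall_notMem.mp h x) ⟨hx, hc⟩
      exact hcent x ⟨hx, hx1, hx2⟩
  have hYcase : (C₁ ∩ C₂) ∩ A₁ = ∅ ∨ (C₁ ∩ C₂) ∩ A₂ = ∅ := by
    by_cases h : ((C₁ ∩ C₂) \ A₂).Nonempty
    · have h' : (C₁ ∩ C₂) \ A₁ = ∅ :=
        hcon.2 h
      right
      ext x; simp only [Set.mem_empty_iff_false, iff_false]
      rintro ⟨hx, hx2⟩
      have hx1 : x ∈ A₁ := by
        by_contra hc
        exact (Set.eq_empty_iff_forall_notMem.mp h' x) ⟨hx, hc⟩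
      exact hcent x ⟨⟨hx1, hx2⟩, hx⟩
    · rw [Set.not_nonempty_iff_eq_empty] at h
      left
      ext x; simp only [Set.mem_empty_iff_false, iff_false]
      rintro ⟨hx, hx1⟩
      have hx2 : x ∈ A₂ := by
        by_contra hc
        exact (Set.eq_empty_iff_forall_notMem.mp h x) ⟨hx, hc⟩
      exact hcent x ⟨⟨hx1, hx2⟩, hx⟩
  apply hcross
  have cover₁ : ∀ x, x ∉ A₁ → x ∈ A₂ :=
    fun x hx => ((h₁.1 ▸ Set.mem_univ x : x ∈ A₁ ∪ A₂)).resolve_left hx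
  have cover₂ : ∀ x, x ∉ A₂ → x ∈ A₁ :=
    fun x hx => ((h₁.1 ▸ Set.mem_univ x : x ∈ A₁ ∪ A₂)).resolve_right hx
  have cover₃ : ∀ x, x ∉ C₁ → x ∈ C₂ :=
    fun x hx => ((h₂.1 ▸ Set.mem_univ x : x ∈ C₁ ∪ C₂)).resolve_left hx
  have cover₄ : ∀ x, x ∉ C₂ → x ∈ C₁ :=
    fun x hx => ((h₂.1 ▸ Set.mem_univ x : x ∈ C₁ ∪ C₂)).resolve_right hx
  rcases hXcase with hX | hX <;> rcases hYcase with hY | hY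
  · -- X∩C₁=∅, Y∩A₁=∅; corner A₁∩C₁
    rcases corner_lemma hG h₁ h₂ hX hY with h | h
    · -- A₁∩C₁=∅ : A₁ ⊆ C₂, C₁ ⊆ A₂
      refine Or.inr (Or.inl ⟨?_, ?_⟩) <;> intro x hx
      · by_contra hc
        exact (Set.eq_empty_iff_forall_notMem.mp h x) ⟨hx, cover₄ x hc⟩
      · by_contra hc
        exact (Set.eq_empty_iff_forall_notMem.mp h x) ⟨cover₂ x hc, hx⟩
    · -- A₁∩C₁=univ : A₂ ⊆ C₁, C₂ ⊆ A₁
      refine Or.inr (Or.inr (Or.inl ⟨?_, ?_⟩)) <;> intro x _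
      · exact (h ▸ Set.mem_univ x : x ∈ A₁ ∩ C₁).2
      · exact (h ▸ Set.mem_univ x : x ∈ A₁ ∩ C₁).1
  · -- X∩C₁=∅, Y∩A₂=∅; corner A₂∩C₁
    have hX' : A₂ ∩ A₁ ∩ C₁ = ∅ := by rw [Set.inter_comm A₂ A₁]; exact hX
    rcases corner_lemma hG (isSep_symm h₁) h₂ hX' hY with h | h
    · -- A₂∩C₁=∅ : A₂ ⊆ C₂, C₁ ⊆ A₁
      refine Or.inr (Or.inr (Or.inr ⟨?_, ?_⟩)) <;> intro x hx
      · by_contra hc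
        exact (Set.eq_empty_iff_forall_notMem.mp h x) ⟨hx, cover₄ x hc⟩
      · by_contra hc
        exact (Set.eq_empty_iff_forall_notMem.mp h x) ⟨cover₁ x hc, hx⟩
    · -- A₂∩C₁=univ : A₁ ⊆ C₁, C₂ ⊆ A₂
      refine Or.inl ⟨?_, ?_⟩ <;> intro x _
      · exact (h ▸ Set.mem_univ x : x ∈ A₂ ∩ C₁).2
      · exact (h ▸ Set.mem_univ x : x ∈ A₂ ∩ C₁).1
  · -- X∩C₂=∅, Y∩A₁=∅; corner A₁∩C₂
    have hY' : C₂ ∩ C₁ ∩ A₁ = ∅ := by rw [Set.inter_comm C₂ C₁]; exact hY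
    rcases corner_lemma hG h₁ (isSep_symm h₂) hX hY' with h | h
    · -- A₁∩C₂=∅ : A₁ ⊆ C₁, C₂ ⊆ A₂
      refine Or.inl ⟨?_, ?_⟩ <;> intro x hx
      · by_contra hc
        exact (Set.eq_empty_iff_forall_notMem.mp h x) ⟨hx, cover₃ x hc⟩
      · by_contra hc
        exact (Set.eq_empty_iff_forall_notMem.mp h x) ⟨cover₂ x hc, hx⟩
    · -- A₁∩C₂=univ : A₂ ⊆ C₂, C₁ ⊆ A₁
      refine Or.inr (Or.inr (Or.inr ⟨?_, ?_⟩)) <;> intro x _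
      · exact (h ▸ Set.mem_univ x : x ∈ A₁ ∩ C₂).2
      · exact (h ▸ Set.mem_univ x : x ∈ A₁ ∩ C₂).1
  · -- X∩C₂=∅, Y∩A₂=∅; corner A₂∩C₂
    have hX' : A₂ ∩ A₁ ∩ C₂ = ∅ := by rw [Set.inter_comm A₂ A₁]; exact hX
    have hY' : C₂ ∩ C₁ ∩ A₂ = ∅ := by rw [Set.inter_comm C₂ C₁]; exact hY
    rcases corner_lemma hG (isSep_symm h₁) (isSep_symm h₂) hX' hY' with h | h
    · -- A₂∩C₂=∅ : A₂ ⊆ C₁, C₂ ⊆ A₁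
      refine Or.inr (Or.inr (Or.inl ⟨?_, ?_⟩)) <;> intro x hx
      · by_contra hc
        exact (Set.eq_empty_iff_forall_notMem.mp h x) ⟨hx, cover₃ x hc⟩
      · by_contra hc
        exact (Set.eq_empty_iff_forall_notMem.mp h x) ⟨cover₁ x hc, hx⟩
    · -- A₂∩C₂=univ : A₁ ⊆ C₂, C₁ ⊆ A₂
      refine Or.inr (Or.inl ⟨?_, ?_⟩) <;> intro x _
      · exact (h ▸ Set.mem_univ x : x ∈ A₂ ∩ C₂).2
      · exact (h ▸ Set.mem_univ x : x ∈ A₂ ∩ C₂).1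

end LS
end

section
/- Let r ∈ ℕ and let G be a graph whose binary cycle space is generated by cycles of length ≤ r. Then every tight separator of G is r-tomic. -/
namespace LS

open SimpleGraph

variable {V : Type*}

/-! Vertices of `X` joined by a path in `localPathGraph G r X`, whose edges are the `r`-local
`X`-paths, are joined by a walk in `W_r(X)`. Suppose `x, y ∈ X` are not, let `R` be the component
of `x` in that graph and let `K₁ ≠ K₂` be components of `G - X` tight at `X`. The edges between `R`
and `K₁` have even intersection with every cycle of length `≤ r`: such a cycle leaves and re-enters
`X` around each visit to `K₁` at two vertices of `X` joined by an `r`-local `X`-path, hence both in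
`R` or both outside it. As these cycles generate the cycle space, the intersection is even for
every cycle; but the cycle `x → K₁ → y → K₂ → x` contains exactly one such edge. -/

namespace IsCompOf

variable {G : SimpleGraph V} {K K₁ K₂ S : Set V}

theorem mem_of_walk (h : IsCompOf G K S) {a b : V} (W : G.Walk a b)
    (hW : ∀ v ∈ W.support, v ∈ S) (ha : a ∈ K) : b ∈ K := by
  induction W with
  | nil => exact ha
  | cons hadj W ih =>
    exact ih (fun v hv => hW v (List.mem_cons_of_mem _ hv))
      (h.2.2.2 _ ha _ (hW _ (List.mem_cons_of_mem _ W.start_mem_support)) hadj)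

theorem mem_iff_of_adj (h : IsCompOf G K S) {a b : V} (hab : G.Adj a b) (ha : a ∈ S)
    (hb : b ∈ S) : a ∈ K ↔ b ∈ K :=
  ⟨fun haK => h.2.2.2 a haK b hb hab, fun hbK => h.2.2.2 b hbK a ha hab.symm⟩

theorem exists_isPath (h : IsCompOf G K S) {a b : V} (ha : a ∈ K) (hb : b ∈ K) :
    ∃ P : G.Walk a b, P.IsPath ∧ ∀ v ∈ P.support, v ∈ K := by
  classical
  obtain ⟨W⟩ := h.2.2.1.preconnected ⟨a, ha⟩ ⟨b, hb⟩
  obtain ⟨P, hP⟩ := W.toPath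
  have hPK : ∀ v ∈ (P.map (Embedding.induce (G := G) K).toHom).support, v ∈ K := by
    intro v hv
    rw [Walk.support_map, List.mem_map] at hv
    obtain ⟨⟨_, hw⟩, -, rfl⟩ := hv
    exact hw
  exact ⟨_, hP.map (Embedding.induce (G := G) K).injective, hPK⟩

theorem exists_isPath_to_nbhdSet (h : IsCompOf G K S) {a y : V} (ha : a ∈ K)
    (hy : y ∈ nbhdSet G K) : ∃ P : G.Walk a y, P.IsPath ∧ ∀ v ∈ P.support, v ∈ K ∨ v = y := by
  obtain ⟨hyK, b, hb, hby⟩ := hy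
  obtain ⟨P, hP, hPK⟩ := h.exists_isPath ha hb
  refine ⟨P.concat hby, hP.concat (fun hyP => hyK (hPK y hyP)) hby, fun v hv => ?_⟩
  rw [Walk.support_concat, List.mem_append, List.mem_singleton] at hv
  exact hv.imp_left (hPK v)

theorem subset_of_mem (h₁ : IsCompOf G K₁ S) (h₂ : IsCompOf G K₂ S) {v : V} (hv₁ : v ∈ K₁)
    (hv₂ : v ∈ K₂) : K₁ ⊆ K₂ := fun _ hw =>
  let ⟨P, _, hP⟩ := h₁.exists_isPath hv₁ hw
  h₂.mem_of_walk P (fun u hu => h₁.2.1 (hP u hu)) hv₂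

theorem disjoint (h₁ : IsCompOf G K₁ S) (h₂ : IsCompOf G K₂ S) (hne : K₁ ≠ K₂) :
    Disjoint K₁ K₂ :=
  Set.disjoint_left.2 fun _ hv₁ hv₂ =>
    hne ((h₁.subset_of_mem h₂ hv₁ hv₂).antisymm (h₂.subset_of_mem h₁ hv₂ hv₁))

end IsCompOf

section CycleSpace

theorem finsum_mem_symmDiff_zmod_two {α : Type*} (f : α → ZMod 2) {A B : Set α}
    (hA : A.Finite) (hB : B.Finite) :
    ∑ᶠ e ∈ symmDiff A B, f e = ∑ᶠ e ∈ A, f e + ∑ᶠ e ∈ B, f e := by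
  have hAB : symmDiff A B ∪ (A ∩ B) = A ∪ B := symmDiff_sup_inf A B
  rw [← finsum_mem_union_inter hA hB, ← hAB,
    finsum_mem_union (t := A ∩ B) (disjoint_symmDiff_inf A B) (hA.symmDiff hB) (hA.inter_of_left B),
    add_assoc, CharTwo.add_self_eq_zero, add_zero]

variable {G : SimpleGraph V}

theorem walkEdgeSet_eq_coe_toFinset [DecidableEq V] {a b : V} (W : G.Walk a b) :
    walkEdgeSet W = ↑W.edges.toFinset := by
  ext e
  simp [walkEdgeSet]

theorem finsum_mem_walkEdgeSet (f : Sym2 V → ZMod 2) {a b : V} {W : G.Walk a b}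
    (hW : W.edges.Nodup) : ∑ᶠ e ∈ walkEdgeSet W, f e = (W.edges.map f).sum := by
  classical
  rw [walkEdgeSet_eq_coe_toFinset, finsum_mem_coe_finset, List.sum_toFinset f hW]

theorem CycleSpaceGenShort.sum_edges_eq_zero {r : ℕ} (hgen : CycleSpaceGenShort G r)
    {σ : Sym2 V → ZMod 2}
    (hσ : ∀ ⦃b : V⦄ (D : G.Walk b b), D.IsCycle → D.length ≤ r → (D.edges.map σ).sum = 0)
    {a : V} {C : G.Walk a a} (hC : C.IsCycle) : (C.edges.map σ).sum = 0 := by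
  obtain ⟨L, hL, hCL⟩ := hgen C hC
  rw [← finsum_mem_walkEdgeSet σ hC.edges_nodup, hCL]
  clear hCL
  suffices (L.foldr (fun p E => symmDiff (walkEdgeSet p.2) E) ∅).Finite ∧
      ∑ᶠ e ∈ L.foldr (fun p E => symmDiff (walkEdgeSet p.2) E) ∅, σ e = 0 from this.2
  induction L with
  | nil => simp
  | cons p L ih =>
    obtain ⟨hfin, hsum⟩ := ih (fun q hq => hL q (List.mem_cons_of_mem p hq))
    obtain ⟨hp, hpr⟩ := hL p List.mem_cons_self
    have hpfin : (walkEdgeSet p.2).Finite := List.finite_toSet p.2.edges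
    refine ⟨hpfin.symmDiff hfin, ?_⟩
    rw [List.foldr_cons, finsum_mem_symmDiff_zmod_two σ hpfin hfin, hsum, add_zero,
      finsum_mem_walkEdgeSet σ hp.edges_nodup, hσ p.2 hp hpr]

end CycleSpace

section LocalPathGraph

variable {G : SimpleGraph V} {r : ℕ} {X : Set V}

theorem IsLocalXPath.reverse {u v : V} {W : G.Walk u v} (h : IsLocalXPath G r X W) :
    IsLocalXPath G r X W.reverse := by
  obtain ⟨⟨⟨hu, hv, hX⟩, hloc⟩, hW⟩ := h
  refine ⟨⟨⟨hv, hu, fun w hw hwX => (hX w (by simpa using hw) hwX).symm⟩, ?_⟩, hW.reverse⟩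
  rcases hloc with ⟨a, C, hC, hCr, hWC⟩ | hlen
  · exact Or.inl ⟨a, C, hC, hCr, fun e he => hWC e (by simpa using he)⟩
  · exact Or.inr (by simpa using hlen)

/-- The `r`-toms of `X` are the vertex sets of the components of this graph inside `X`. -/
def localPathGraph (G : SimpleGraph V) (r : ℕ) (X : Set V) : SimpleGraph V where
  Adj u v := u ≠ v ∧ ∃ W : G.Walk u v, IsLocalXPath G r X W
  symm := ⟨fun _ _ ⟨hne, W, hW⟩ => ⟨hne.symm, W.reverse, hW.reverse⟩⟩
  loopless := ⟨fun _ h => h.1 rfl⟩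

theorem localPathGraph_adj {u v : V} :
    (localPathGraph G r X).Adj u v ↔ u ≠ v ∧ ∃ W : G.Walk u v, IsLocalXPath G r X W :=
  Iff.rfl

theorem localPathGraph_adj_of_isXWalk {u v a : V} {W : G.Walk u v} (hW : IsXWalk G X W)
    {D : G.Walk a a} (hD : D.IsCycle) (hDr : D.length ≤ r) (hWD : ∀ e ∈ W.edges, e ∈ D.edges)
    (huv : u ≠ v) : (localPathGraph G r X).Adj u v := by
  classical
  refine localPathGraph_adj.2 ⟨huv, W.bypass, ⟨⟨hW.1, hW.2.1, fun w hw =>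
    hW.2.2 w (W.support_bypass_subset_support hw)⟩, Or.inl ⟨a, D, hD, hDr, fun e he =>
    hWD e (W.edges_bypass_subset_edges he)⟩⟩, W.bypass_isPath⟩

theorem IsLocalXPath.count_support [DecidableEq V] {u v : V} {W : G.Walk u v}
    (hW : IsLocalXPath G r X W) (huv : u ≠ v) {x : V} (hx : x ∈ X) :
    W.support.count x = [u, v].count x := by
  have huv' : [u, v].Nodup := by simp [huv]
  by_cases hxW : x ∈ W.support
  · have hxuv : x ∈ [u, v] := by
      rcases hW.1.1.2.2 x hxW hx with rfl | rfl <;> simp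
    rw [List.count_eq_one_of_mem hW.2.support_nodup hxW, List.count_eq_one_of_mem huv' hxuv]
  · have hxuv : x ∉ [u, v] := by
      simp only [List.mem_cons, List.not_mem_nil, or_false]
      rintro (rfl | rfl)
      exacts [hxW W.start_mem_support, hxW W.end_mem_support]
    rw [List.count_eq_zero.2 hxW, List.count_eq_zero.2 hxuv]

theorem exists_concatLocalPaths_of_walk [DecidableEq V] {u y : V}
    (p : (localPathGraph G r X).Walk u y) (hp : ¬p.Nil) :
    ∃ W : G.Walk u y, ConcatLocalPaths G r X W ∧
      ∀ x ∈ X, W.support.count x = p.support.count x := by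
  induction p with
  | nil => exact absurd Walk.Nil.nil hp
  | cons hadj p ih =>
    rename_i u v y
    obtain ⟨huv, S, hS⟩ := localPathGraph_adj.1 hadj
    rcases p with _ | ⟨hadj', p'⟩
    · exact ⟨S, .single S hS, fun x hx => hS.count_support huv hx⟩
    · obtain ⟨W, hW, hcount⟩ := ih Walk.not_nil_cons
      refine ⟨S.append W, .comp S W hS hW, fun x hx => ?_⟩
      calc (S.append W).support.count x = ([u, v] ++ W.support.tail).count x := by
            rw [Walk.support_append, List.count_append, List.count_append,
              hS.count_support huv hx]
        _ = (u :: W.support).count x := by rw [← W.cons_tail_support]; rfl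
        _ = _ := by rw [Walk.support_cons, List.count_cons, List.count_cons, hcount x hx]

theorem exists_memWr_of_reachable {x y : V} (hxy : x ≠ y)
    (h : (localPathGraph G r X).Reachable x y) : ∃ W : G.Walk x y, MemWr G r X W := by
  classical
  obtain ⟨p⟩ := h
  obtain ⟨W, hW, hcount⟩ := exists_concatLocalPaths_of_walk p.toPath.1 (Walk.not_nil_of_ne hxy)
  refine ⟨W, hW, fun v hv hdup => ?_⟩
  have h2 := List.duplicate_iff_two_le_count.1 hdup
  have h1 := List.nodup_iff_count_le_one.1 p.toPath.2.support_nodup v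
  rw [hcount v hv] at h2
  omega

end LocalPathGraph

section EdgeMark

/-- For disjoint `R` and `K`, the indicator of the edges between `R` and `K`. -/
noncomputable def edgeMark (R K : Set V) : Sym2 V → ZMod 2 :=
  Sym2.lift ⟨fun u w => R.indicator 1 u * K.indicator 1 w + R.indicator 1 w * K.indicator 1 u,
    fun _ _ => add_comm _ _⟩

@[simp]
theorem edgeMark_mk (R K : Set V) (u w : V) :
    edgeMark R K s(u, w) =
      R.indicator 1 u * K.indicator 1 w + R.indicator 1 w * K.indicator 1 u :=
  rfl

theorem edgeMark_comm (R K : Set V) : edgeMark R K = edgeMark K R := by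
  ext e
  induction e using Sym2.ind
  simp only [edgeMark_mk]
  ring

variable {G : SimpleGraph V} {X R K : Set V}

theorem sum_edgeMark_eq_zero_of_forall_notMem_left {a b : V} (W : G.Walk a b)
    (hW : ∀ v ∈ W.support, v ∉ R) : (W.edges.map (edgeMark R K)).sum = 0 := by
  induction W with
  | nil => simp
  | cons h W ih =>
    rw [Walk.edges_cons, List.map_cons, List.sum_cons,
      ih fun v hv => hW v (List.mem_cons_of_mem _ hv), edgeMark_mk,
      Set.indicator_of_notMem (hW _ List.mem_cons_self),
      Set.indicator_of_notMem (hW _ (List.mem_cons_of_mem _ W.start_mem_support))]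
    simp

theorem sum_edgeMark_eq_zero_of_forall_notMem_right {a b : V} (W : G.Walk a b)
    (hW : ∀ v ∈ W.support, v ∉ K) : (W.edges.map (edgeMark R K)).sum = 0 := by
  rw [edgeMark_comm]
  exact sum_edgeMark_eq_zero_of_forall_notMem_left W hW

theorem forall_tail_support_concat_notMem {u p p' : V} {S : G.Walk u p}
    (hS : ∀ v ∈ S.support.tail, v ∉ X) (h : G.Adj p p') (hp' : p' ∉ X) :
    ∀ v ∈ (S.concat h).support.tail, v ∉ X := by
  intro v hv
  rw [Walk.support_concat, ← S.cons_tail_support, List.cons_append, List.tail_cons,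
    List.mem_append, List.mem_singleton] at hv
  rcases hv with hv | rfl
  exacts [hS v hv, hp']

theorem isXWalk_concat {u p p' : V} {S : G.Walk u p} (hu : u ∈ X)
    (hS : ∀ v ∈ S.support.tail, v ∉ X) (h : G.Adj p p') (hp' : p' ∈ X) :
    IsXWalk G X (S.concat h) := by
  refine ⟨hu, hp', fun w hw hwX => ?_⟩
  rw [Walk.support_concat, ← S.cons_tail_support] at hw
  simp only [List.cons_append, List.mem_cons, List.mem_append, List.not_mem_nil, or_false] at hw
  rcases hw with hw | hw | hw
  exacts [.inl hw, absurd hwX (hS w hw), .inr hw]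

/-- `S` is what has been walked since the last visit to `X`, at `u`. The marks of an excursion
from `u` into `K` and back to `X` at `u'` cancel, since `hR` puts `u` and `u'` on the same side
of `R`. -/
theorem sum_edgeMark_of_excursion {E : Set (Sym2 V)} (hK : IsCompOf G K Xᶜ) (hRX : R ⊆ X)
    (hR : ∀ ⦃u u' : V⦄ (W : G.Walk u u'), IsXWalk G X W → (∀ e ∈ W.edges, e ∈ E) →
      (u ∈ R ↔ u' ∈ R))
    {p q : V} (W : G.Walk p q) (hq : q ∈ X) (hWE : ∀ e ∈ W.edges, e ∈ E)
    {u : V} (hu : u ∈ X) (S : G.Walk u p) (hS : ∀ v ∈ S.support.tail, v ∉ X)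
    (hSE : ∀ e ∈ S.edges, e ∈ E) :
    (W.edges.map (edgeMark R K)).sum = K.indicator 1 p * R.indicator 1 u := by
  have hKX : ∀ {v}, v ∈ X → v ∉ K := fun hv hvK => hK.2.1 hvK hv
  have hRX' : ∀ {v}, v ∉ X → v ∉ R := fun hv hvR => hv (hRX hvR)
  induction W generalizing u with
  | nil => simp [Set.indicator_of_notMem (hKX hq)]
  | cons hpp' W ih =>
    rename_i p p' q
    have hWE' : ∀ e ∈ W.edges, e ∈ E := fun e he => hWE e (List.mem_cons_of_mem _ he)
    have hSE' : ∀ e ∈ (S.concat hpp').edges, e ∈ E := by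
      intro e he
      rw [Walk.edges_concat, List.concat_eq_append, List.mem_append, List.mem_singleton] at he
      rcases he with he | rfl
      exacts [hSE e he, hWE _ List.mem_cons_self]
    rw [Walk.edges_cons, List.map_cons, List.sum_cons, edgeMark_mk]
    by_cases hp' : p' ∈ X
    · rw [ih hq hWE' hp' Walk.nil (by simp) (by simp), Set.indicator_of_notMem (hKX hp')]
      by_cases hp : p ∈ X
      · simp [Set.indicator_of_notMem (hKX hp)]
      · rw [Set.indicator_eq_indicator (g := 1) (hR _ (isXWalk_concat hu hS hpp' hp') hSE') rfl,
          Set.indicator_of_notMem (hRX' hp)]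
        ring
    · rw [ih hq hWE' hu (S.concat hpp') (forall_tail_support_concat_notMem hS hpp' hp') hSE',
        Set.indicator_of_notMem (hRX' hp')]
      by_cases hp : p ∈ X
      · obtain rfl : u = p := by_contra fun hup => hS p (S.end_mem_tail_support_of_ne hup) hp
        rw [Set.indicator_of_notMem (hKX hp), mul_zero, add_zero, zero_mul, mul_comm,
          CharTwo.add_self_eq_zero]
      · rw [Set.indicator_of_notMem (hRX' hp),
          Set.indicator_eq_indicator (g := 1) (hK.mem_iff_of_adj hpp' hp hp') rfl]
        ring

theorem sum_edgeMark_closedWalk_eq_zero {E : Set (Sym2 V)} (hK : IsCompOf G K Xᶜ) (hRX : R ⊆ X)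
    (hR : ∀ ⦃u u' : V⦄ (W : G.Walk u u'), IsXWalk G X W → (∀ e ∈ W.edges, e ∈ E) →
      (u ∈ R ↔ u' ∈ R))
    {a : V} (D : G.Walk a a) (hDE : ∀ e ∈ D.edges, e ∈ E) :
    (D.edges.map (edgeMark R K)).sum = 0 := by
  classical
  by_cases hDX : ∃ v ∈ D.support, v ∈ X
  · obtain ⟨v, hv, hvX⟩ := hDX
    have hperm := (D.rotate_edges v hv).perm
    rw [← (hperm.map _).sum_eq,
      sum_edgeMark_of_excursion hK hRX hR (D.rotate v hv) hvX
        (fun e he => hDE e (hperm.mem_iff.1 he)) hvX Walk.nil (by simp) (by simp),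
      Set.indicator_of_notMem fun hvK => hK.2.1 hvK hvX, zero_mul]
  · push Not at hDX
    exact sum_edgeMark_eq_zero_of_forall_notMem_left D fun v hv hvR => hDX v hv (hRX hvR)

theorem sum_edgeMark_eq_zero_of_isCycle {r : ℕ} (hK : IsCompOf G K Xᶜ) (x : V) {a : V}
    {D : G.Walk a a} (hD : D.IsCycle) (hDr : D.length ≤ r) :
    (D.edges.map (edgeMark {u ∈ X | (localPathGraph G r X).Reachable x u} K)).sum = 0 := by
  refine sum_edgeMark_closedWalk_eq_zero hK (Set.sep_subset X _) ?_ D fun e he => he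
  intro u u' W hW hWD
  by_cases huu' : u = u'
  · rw [huu']
  · have hadj := localPathGraph_adj_of_isXWalk hW hD hDr hWD huu'
    have hreach : (localPathGraph G r X).Reachable x u ↔ (localPathGraph G r X).Reachable x u' :=
      ⟨fun h => h.trans hadj.reachable, fun h => h.trans hadj.symm.reachable⟩
    exact and_congr (iff_of_true hW.1 hW.2.1) hreach

end EdgeMark

theorem isCycle_cons_append {G : SimpleGraph V} {x a y : V} (hxa : G.Adj x a)
    {Q₁ : G.Walk a y} {Q₂ : G.Walk y x} (hQ₁ : Q₁.IsPath) (hQ₂ : Q₂.IsPath)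
    (h : ∀ v ∈ Q₁.support, v ∈ Q₂.support → v = y) (hx : x ∉ Q₁.support) (ha : a ∉ Q₂.support) :
    (Walk.cons hxa (Q₁.append Q₂)).IsCycle := by
  have hQ₂nd := hQ₂.support_nodup
  rw [← Q₂.cons_tail_support, List.nodup_cons] at hQ₂nd
  refine (Walk.cons_isCycle_iff _ hxa).2 ⟨?_, ?_⟩
  · rw [Walk.isPath_def, Walk.support_append, List.nodup_append]
    refine ⟨hQ₁.support_nodup, hQ₂nd.2, fun v hv₁ w hv₂ hvw => ?_⟩
    subst hvw
    obtain rfl := h v hv₁ (List.mem_of_mem_tail hv₂)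
    exact hQ₂nd.1 hv₂
  · rw [Walk.edges_append, List.mem_append]
    rintro (he | he)
    exacts [hx (Q₁.fst_mem_support_of_mem_edges he), ha (Q₂.snd_mem_support_of_mem_edges he)]

theorem exists_isCycle_sum_edgeMark_eq_one {G : SimpleGraph V} {X K₁ K₂ R : Set V}
    (hK₁ : TightCompAt G K₁ X) (hK₂ : TightCompAt G K₂ X) (hne : K₁ ≠ K₂) (hRX : R ⊆ X)
    {x y : V} (hxR : x ∈ R) (hy : y ∈ X) (hyR : y ∉ R) :
    ∃ C : G.Walk x x, C.IsCycle ∧ (C.edges.map (edgeMark R K₁)).sum = 1 := by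
  have hx : x ∈ X := hRX hxR
  have hxy : x ≠ y := fun h => hyR (h ▸ hxR)
  have hK₁X : ∀ {v}, v ∈ K₁ → v ∉ X := fun hv => hK₁.1.2.1 hv
  have hK₂X : ∀ {v}, v ∈ K₂ → v ∉ X := fun hv => hK₂.1.2.1 hv
  have hK₁₂ := Set.disjoint_left.1 (hK₁.1.disjoint hK₂.1 hne)
  obtain ⟨-, a, ha, hax⟩ : x ∈ nbhdSet G K₁ := hK₁.2 ▸ hx
  obtain ⟨-, b, hb, hby⟩ : y ∈ nbhdSet G K₂ := hK₂.2 ▸ hy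
  obtain ⟨Q₁, hQ₁, hQ₁K⟩ := hK₁.1.exists_isPath_to_nbhdSet ha (hK₁.2 ▸ hy)
  obtain ⟨Q₂, hQ₂, hQ₂K⟩ := hK₂.1.exists_isPath_to_nbhdSet hb (hK₂.2 ▸ hx)
  let Q₂' := Walk.cons hby.symm Q₂
  have hQ₂'K : ∀ v ∈ Q₂'.support, v ∉ K₁ := by
    intro v hv hvK
    rcases List.mem_cons.1 hv with rfl | hv
    · exact hK₁X hvK hy
    · rcases hQ₂K v hv with h | rfl
      exacts [hK₁₂ hvK h, hK₁X hvK hx]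
  have hQ₂' : Q₂'.IsPath := hQ₂.cons fun hyQ₂ => by
    rcases hQ₂K y hyQ₂ with h | h
    exacts [hK₂X h hy, hxy h.symm]
  have hC := isCycle_cons_append hax.symm hQ₁ hQ₂'
    (fun v hv₁ hv₂ => (hQ₁K v hv₁).resolve_left fun h => hQ₂'K v hv₂ h)
    (fun hxQ₁ => (hQ₁K x hxQ₁).elim (fun h => hK₁X h hx) hxy) (fun haQ₂' => hQ₂'K a haQ₂' ha)
  refine ⟨_, hC, ?_⟩
  have hQ₁R : ∀ v ∈ Q₁.support, v ∉ R := fun v hv hvR => by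
    rcases hQ₁K v hv with h | rfl
    exacts [hK₁X h (hRX hvR), hyR hvR]
  rw [Walk.edges_cons, List.map_cons, List.sum_cons, Walk.edges_append, List.map_append,
    List.sum_append, sum_edgeMark_eq_zero_of_forall_notMem_left Q₁ hQ₁R,
    sum_edgeMark_eq_zero_of_forall_notMem_right Q₂' hQ₂'K, edgeMark_mk,
    Set.indicator_of_mem hxR, Set.indicator_of_mem ha,
    Set.indicator_of_notMem fun h => hK₁X ha (hRX h), Set.indicator_of_notMem fun h => hK₁X h hx]
  simp

/-- If the binary cycle space of `G` is generated by cycles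
of length `≤ r`, then every tight separator of `G` is `r`-tomic. -/
theorem statement10 {V : Type*} (G : SimpleGraph V) (r : ℕ)
    (hgen : CycleSpaceGenShort G r) (X : Set V) (hX : TightSeparator G X) :
    Rtomic G r X := by
  obtain ⟨K₁, K₂, hne, hK₁, hK₂⟩ := hX
  intro x hx y hy hxy
  apply exists_memWr_of_reachable hxy
  by_contra hxy'
  let R := {u ∈ X | (localPathGraph G r X).Reachable x u}
  obtain ⟨C, hC, hCsum⟩ := exists_isCycle_sum_edgeMark_eq_one hK₁ hK₂ hne (Set.sep_subset X _)
    (⟨hx, .refl x⟩ : x ∈ R) hy fun hyR => hxy' hyR.2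
  have hzero := hgen.sum_edges_eq_zero
    (fun _ _ hD hDr => sum_edgeMark_eq_zero_of_isCycle hK₁.1 x hD hDr) hC
  exact one_ne_zero (hCsum.symm.trans hzero)

end LS
end
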